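/- Let Y be a real-valued random variable and X an ℝ^p-valued random vector such that Y is conditionally independent of X given B^⊤X, where B ∈ ℝ^{p×d}. Suppose B = Θ Γ for matrices Θ ∈ ℝ^{p×q} and Γ ∈ ℝ^{q×d}. Then Y is conditionally independent of Θ^⊤X given Γ^⊤(Θ^⊤X). -/

import Mathlib

open MeasureTheory ProbabilityTheory Matrix

theorem Matrix.transpose_mul_mulVec {m n l R : Type*} [Fintype m] [Fintype n] [CommSemiring R]
    (A : Matrix m n R) (C : Matrix n l R) (x : m → R) :
    (A * C)ᵀ *ᵥ x = Cᵀ *ᵥ (Aᵀ *ᵥ x) := by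
  rw [transpose_mul, mulVec_mulVec]

theorem envelope_reduction_condIndep_general
    {Ω : Type*} [mΩ : MeasurableSpace Ω] [StandardBorelSpace Ω]
    (μ : Measure Ω) [IsProbabilityMeasure μ]
    {p d q : ℕ}
    (Y : Ω → ℝ) (X : Ω → (Fin p → ℝ))
    (B : Matrix (Fin p) (Fin d) ℝ) (Θ : Matrix (Fin p) (Fin q) ℝ)
    (Γ : Matrix (Fin q) (Fin d) ℝ) (hB : B = Θ * Γ)
    (hm : MeasurableSpace.comap (fun ω => Bᵀ.mulVec (X ω)) inferInstance ≤ mΩ)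
    (hm' : MeasurableSpace.comap (fun ω => Γᵀ.mulVec (Θᵀ.mulVec (X ω))) inferInstance ≤ mΩ)
    -- hypothesis: Y ⊥ X | Bᵀ X
    (hCI : CondIndepFun (MeasurableSpace.comap (fun ω => Bᵀ.mulVec (X ω)) inferInstance)
      hm Y X μ) :
    -- conclusion: Y ⊥ Θᵀ X | Γᵀ (Θᵀ X)
    CondIndepFun
      (MeasurableSpace.comap (fun ω => Γᵀ.mulVec (Θᵀ.mulVec (X ω))) inferInstance)
      hm' Y (fun ω => Θᵀ.mulVec (X ω)) μ := by
  have hΘ : Measurable (Θᵀ *ᵥ ·) := (mulVecLin Θᵀ).continuous_of_finiteDimensional.measurable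
  -- The conditioning statistics `Bᵀ X` and `Γᵀ (Θᵀ X)` coincide, so only the covariate changes.
  subst hB
  simp only [transpose_mul_mulVec] at hm hCI
  exact hCI.comp measurable_id hΘ

/-- **Envelope-subspace reduction for sufficient dimension reduction.** If `Y ⊥ X | Bᵀ X`
and `B = Θ Γ`, then `Y ⊥ Θᵀ X | Γᵀ (Θᵀ X)`: the dimension-reduction condition transfers to
the reduced covariates `Θᵀ X`. -/
theorem envelope_reduction_condIndep
    {Ω : Type*} [mΩ : MeasurableSpace Ω] [StandardBorelSpace Ω] [Nonempty Ω]
    (μ : Measure Ω) [IsProbabilityMeasure μ]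
    {p d q : ℕ}
    (Y : Ω → ℝ) (X : Ω → (Fin p → ℝ)) (hYm : Measurable Y) (hXm : Measurable X)
    (B : Matrix (Fin p) (Fin d) ℝ) (Θ : Matrix (Fin p) (Fin q) ℝ)
    (Γ : Matrix (Fin q) (Fin d) ℝ) (hB : B = Θ * Γ)
    (hm : MeasurableSpace.comap (fun ω => Bᵀ.mulVec (X ω)) inferInstance ≤ mΩ)
    (hm' : MeasurableSpace.comap (fun ω => Γᵀ.mulVec (Θᵀ.mulVec (X ω))) inferInstance ≤ mΩ)
    -- hypothesis: Y ⊥ X | Bᵀ X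
    (hCI : CondIndepFun (MeasurableSpace.comap (fun ω => Bᵀ.mulVec (X ω)) inferInstance)
      hm Y X μ) :
    -- conclusion: Y ⊥ Θᵀ X | Γᵀ (Θᵀ X)
    CondIndepFun
      (MeasurableSpace.comap (fun ω => Γᵀ.mulVec (Θᵀ.mulVec (X ω))) inferInstance)
      hm' Y (fun ω => Θᵀ.mulVec (X ω)) μ :=
  envelope_reduction_condIndep_general (mΩ := mΩ) μ Y X B Θ Γ hB hm hm' hCI
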